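/- Let μ be a closure operator on 2^U (U finite), C a closed set, and α ⊆ μ a cover of μ. Then the interior restriction α_{⊂C} = {(S,Sμ) ∈ α | Sμ ⊊ C} satisfies (α_{⊂C})⁺ = (μ_{⊂C})⁺, where μ_{⊂C} = {(X,Xμ) ∈ μ | Xμ ⊊ C}. In particular, the closure generated by the interior of a cover is independent of the choice of cover. -/

import Mathlib

open Set

variable {U : Type*}

/-- A closure operator on the power set of `U`: inclusion, monotonicity, idempotence. -/
def IsClosure (μ : Set U → Set U) : Prop :=
  (∀ X, X ⊆ μ X) ∧ (∀ X Y : Set U, X ⊆ Y → μ X ⊆ μ Y) ∧ (∀ X, μ (μ X) = μ X)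

/-- `K` is a key of `μ`: no proper subset of `K` has the same closure. -/
def IsKey (μ : Set U → Set U) (K : Set U) : Prop :=
  ∀ S : Set U, S ⊂ K → μ S ≠ μ K

/-- One step of the Extension-by-Closure recurrence for a set of pairs `α`. -/
def ecStep (α : Set (Set U × Set U)) (X : Set U) : Set U :=
  X ∪ ⋃ p ∈ {q ∈ α | q.1 ⊆ X}, p.2

/-- The iterates `Xα_t` of the Extension-by-Closure recurrence. -/
def ecIter (α : Set (Set U × Set U)) (X : Set U) : ℕ → Set U
  | 0 => X
  | n + 1 => ecStep α (ecIter α X n)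

/-- `Xα⁺`: the eventual stable value of the increasing recurrence
(for finite `U` the union over all iterates is the stable limit). -/
def extC (α : Set (Set U × Set U)) : Set U → Set U :=
  fun X => ⋃ n, ecIter α X n

/-- The closure `μ` viewed as a set of pairs `(X, Xμ)`. -/
def graphOf (μ : Set U → Set U) : Set (Set U × Set U) :=
  {p | p.2 = μ p.1}

/-- `α` is a cover of `μ`: a subset of `μ` (as pairs) with `α⁺ = μ`. -/
def IsCover (μ : Set U → Set U) (α : Set (Set U × Set U)) : Prop :=
  α ⊆ graphOf μ ∧ extC α = μ

/-!
A cover computes `Xμ` as `Xα⁺`, and when `Xμ ⊊ C` every pair `(S, Sμ)` of `α` that fires along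
the way has `Sμ ⊆ Xμ ⊊ C`; so `α_{⊂C}` alone already yields `Xμ`. Hence every pair of `μ_{⊂C}`
is derivable from `α_{⊂C}`, while `α_{⊂C} ⊆ μ_{⊂C}`. Both therefore generate the same closure,
the least superset of `X` closed under their pairs (for finite `U`, `Xα⁺` is closed under `α`).
-/

def IsClosedUnder (α : Set (Set U × Set U)) (Y : Set U) : Prop :=
  ∀ p ∈ α, p.1 ⊆ Y → p.2 ⊆ Y

section ExtensionByClosure

variable {α β : Set (Set U × Set U)} {X Y : Set U}

lemma ecStep_mono (hαβ : α ⊆ β) (hXY : X ⊆ Y) : ecStep α X ⊆ ecStep β Y :=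
  union_subset_union hXY <|
    biUnion_mono (fun _ hp => ⟨hαβ hp.1, hp.2.trans hXY⟩) fun _ _ => subset_rfl

lemma ecIter_mono (hαβ : α ⊆ β) (hXY : X ⊆ Y) : ∀ n, ecIter α X n ⊆ ecIter β Y n
  | 0 => hXY
  | n + 1 => ecStep_mono hαβ (ecIter_mono hαβ hXY n)

lemma ecIter_monotone : Monotone (ecIter α X) :=
  monotone_nat_of_le_succ fun _ => subset_union_left

lemma ecStep_subset (hXY : X ⊆ Y) (hY : IsClosedUnder α Y) : ecStep α X ⊆ Y :=
  union_subset hXY <| iUnion₂_subset fun p hp => hY p hp.1 (hp.2.trans hXY)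

lemma ecIter_subset (hXY : X ⊆ Y) (hY : IsClosedUnder α Y) : ∀ n, ecIter α X n ⊆ Y
  | 0 => hXY
  | n + 1 => ecStep_subset (ecIter_subset hXY hY n) hY

lemma subset_extC : X ⊆ extC α X :=
  subset_iUnion (ecIter α X) 0

lemma extC_mono (hαβ : α ⊆ β) (hXY : X ⊆ Y) : extC α X ⊆ extC β Y :=
  iUnion_mono (ecIter_mono hαβ hXY)

lemma extC_subset (hXY : X ⊆ Y) (hY : IsClosedUnder α Y) : extC α X ⊆ Y :=
  iUnion_subset (ecIter_subset hXY hY)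

lemma exists_extC_eq_ecIter [Finite U] : ∃ n, extC α X = ecIter α X n := by
  obtain ⟨n, hn⟩ := WellFoundedGT.monotone_chain_condition ⟨ecIter α X, ecIter_monotone⟩
  refine ⟨n, (iUnion_subset fun m => ?_).antisymm (subset_iUnion _ n)⟩
  rcases le_total m n with hmn | hnm
  · exact ecIter_monotone hmn
  · exact (hn m hnm).ge

lemma isClosedUnder_extC [Finite U] : IsClosedUnder α (extC α X) := by
  intro p hp hp₁
  obtain ⟨n, hn⟩ := exists_extC_eq_ecIter (α := α) (X := X)
  rw [hn] at hp₁
  calc p.2 ⊆ ecStep α (ecIter α X n) :=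
        subset_union_of_subset_right
          (subset_biUnion_of_mem (u := Prod.snd) (show p ∈ {q ∈ α | q.1 ⊆ _} from ⟨hp, hp₁⟩)) _
    _ ⊆ extC α X := subset_iUnion (ecIter α X) (n + 1)

lemma extC_subset_extC [Finite U] (h : Y ⊆ extC α X) : extC α Y ⊆ extC α X :=
  extC_subset h isClosedUnder_extC

end ExtensionByClosure

section Interior

variable [Finite U] {α : Set (Set U × Set U)} {C S : Set U}

lemma extC_sep_ssubset_eq (hα : α ⊆ graphOf (extC α)) (hS : extC α S ⊂ C) :
    extC {p ∈ α | p.2 ⊂ C} S = extC α S := by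
  refine (extC_mono (sep_subset _ _) subset_rfl).antisymm <|
    extC_subset subset_extC fun p hp hp₁ => isClosedUnder_extC p ⟨hp, ?_⟩ hp₁
  rw [hα hp]
  exact (extC_subset_extC (hp₁.trans (extC_mono (sep_subset _ _) subset_rfl))).trans_lt hS

lemma extC_sep_ssubset_eq_graphOf (hα : α ⊆ graphOf (extC α)) :
    extC {p ∈ α | p.2 ⊂ C} = extC {p ∈ graphOf (extC α) | p.2 ⊂ C} := by
  have hsub : {p ∈ α | p.2 ⊂ C} ⊆ {p ∈ graphOf (extC α) | p.2 ⊂ C} :=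
    fun _ hp => ⟨hα hp.1, hp.2⟩
  funext X
  refine (extC_mono hsub subset_rfl).antisymm <|
    extC_subset subset_extC fun p ⟨hp, hpC⟩ hp₁ => ?_
  rw [hp] at hpC ⊢
  rw [← extC_sep_ssubset_eq hα hpC]
  exact extC_subset_extC hp₁

end Interior

theorem interior_closure_cover_independent_general [Finite U] (μ : Set U → Set U)
    (C : Set U) (α : Set (Set U × Set U)) (hα : IsCover μ α) :
    extC {p ∈ α | p.2 ⊂ C} = extC {p ∈ graphOf μ | p.2 ⊂ C} := by
  obtain ⟨hαμ, rfl⟩ := hα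
  exact extC_sep_ssubset_eq_graphOf hαμ

theorem interior_closure_cover_independent [Finite U] (μ : Set U → Set U)
    (hμ : IsClosure μ) (C : Set U) (hC : μ C = C)
    (α : Set (Set U × Set U)) (hα : IsCover μ α) :
    extC {p ∈ α | p.2 ⊂ C} = extC {p ∈ graphOf μ | p.2 ⊂ C} :=
  interior_closure_cover_independent_general μ C α hα
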